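/- If a function J : S → [0,+∞] satisfies J ≥ T(J), then J ≥ J*. -/

import Mathlib

/-!
Common framework: countable-state/countable-control total-cost MDPs under the
General Convergence (GC) condition, following H. Yu, "On Convergence of Value
Iteration for a Class of Total Cost Markov Decision Processes".

States `S` and controls `C` are countable types; `U x` is the nonempty set of
feasible controls at `x`; `g x u ∈ (-∞, +∞]` is the one-stage cost (an `EReal`
that is never `⊥` on feasible pairs); `q x u x'` are transition probabilities.

A policy is represented by its conditional control distributions given the
(reversed) history of past (state, control) pairs and the current state.
Expectations are computed by explicit countable sums, splitting every
extended-real quantity into its positive and negative parts (computed in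
`ℝ≥0∞`) and recombining with the convention `∞ - ∞ = ∞`.
-/

open scoped ENNReal Classical
open Filter

noncomputable section

namespace GCMDP

/-- The positive part of an extended real, as an element of `ℝ≥0∞`. -/
def ePos (a : EReal) : ℝ≥0∞ := if a = ⊤ then ⊤ else ENNReal.ofReal a.toReal

/-- Recombine a positive part `P` and a negative part `N` into an extended real,
with the convention `∞ - ∞ = ∞`. -/
def signedSum (P N : ℝ≥0∞) : EReal := if P = ⊤ then ⊤ else (P : EReal) - (N : EReal)

variable {S C : Type}

/-- A (randomized, history-dependent) policy: to each reversed list of past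
(state, control) pairs and each current state it assigns a mass function on
controls. -/
def Policy (S C : Type) : Type := List (S × C) → S → C → ℝ≥0∞

/-- A policy is valid for the control constraint `U` if each of its conditional
distributions is a probability distribution concentrated on the feasible set. -/
def IsPolicy (U : S → Set C) (π : Policy S C) : Prop :=
  ∀ (h : List (S × C)) (x : S), (∑' u : C, π h x u) = 1 ∧ ∀ u : C, π h x u ≠ 0 → u ∈ U x

/-- A policy is nonrandomized if each of its conditional distributions is a
point mass. -/
def Nonrandomized (π : Policy S C) : Prop :=
  ∀ (h : List (S × C)) (x : S), ∃ u : C, ∀ u' : C, π h x u' = if u' = u then 1 else 0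

/-- The initial state recorded in a reversed history `h` with current state `x`. -/
def initOf (h : List (S × C)) (x : S) : S := ((h.getLast?).map Prod.fst).getD x

/-- A policy is semi-Markov if its decision at time `k` depends on the history
only through the time `k`, the initial state and the current state. -/
def IsSemiMarkov (π : Policy S C) : Prop :=
  ∀ (h h' : List (S × C)) (x : S), h.length = h'.length → initOf h x = initOf h' x →
    π h x = π h' x

/-- A policy is Markov if its decision at time `k` depends on the history only
through the time `k` and the current state. -/
def IsMarkov (π : Policy S C) : Prop :=
  ∀ (h h' : List (S × C)) (x : S), h.length = h'.length → π h x = π h' x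

/-- A policy is stationary if its decision depends only on the current state. -/
def IsStationary (π : Policy S C) : Prop :=
  ∀ (h h' : List (S × C)) (x : S), π h x = π h' x

/-- The stationary policy determined by a one-step decision rule `μ`. -/
def toPolicy (μ : S → C → ℝ≥0∞) : Policy S C := fun _ x u => μ x u

/-- Probability that, starting from `x₀` and following policy `π`, the first
transitions produce the reversed history `h` and current state `y`. -/
def histProb (q : S → C → S → ℝ≥0∞) (π : Policy S C) (x₀ : S) :
    List (S × C) → S → ℝ≥0∞
  | [], y => if y = x₀ then 1 else 0
  | (z, u) :: h, y => histProb q π x₀ h z * π h z u * q z u y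

/-- Marginal distribution of the state `x_n` at time `n` under policy `π`
started at `x₀`. -/
def sDist (q : S → C → S → ℝ≥0∞) (π : Policy S C) (x₀ : S) (n : ℕ) (y : S) : ℝ≥0∞ :=
  ∑' h : {l : List (S × C) // l.length = n}, histProb q π x₀ h.1 y

/-- Joint distribution of the state-control pair `(x_n, u_n)` at time `n`. -/
def saDist (q : S → C → S → ℝ≥0∞) (π : Policy S C) (x₀ : S) (n : ℕ) (y : S) (u : C) : ℝ≥0∞ :=
  ∑' h : {l : List (S × C) // l.length = n}, histProb q π x₀ h.1 y * π h.1 y u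

/-- Expectation `E^π_{x₀}[f(x_n, u_n)]` of a nonnegative cost. -/
def costAt (q : S → C → S → ℝ≥0∞) (π : Policy S C) (x₀ : S) (n : ℕ)
    (f : S → C → ℝ≥0∞) : ℝ≥0∞ :=
  ∑' y : S, ∑' u : C, saDist q π x₀ n y u * f y u

/-- Positive part `g₊` of the one-stage cost. -/
def gPos (g : S → C → EReal) (x : S) (u : C) : ℝ≥0∞ := ePos (g x u)

/-- Negative part `g₋` of the one-stage cost. -/
def gNeg (g : S → C → EReal) (x : S) (u : C) : ℝ≥0∞ := ePos (-(g x u))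

/-- `J_π^+(x) = E^π_x[∑_k g₊(x_k,u_k)]`. -/
def Jplus (q : S → C → S → ℝ≥0∞) (g : S → C → EReal) (π : Policy S C) (x : S) : ℝ≥0∞ :=
  ∑' n : ℕ, costAt q π x n (gPos g)

/-- `J_π^-(x) = E^π_x[∑_k g₋(x_k,u_k)]`. -/
def Jminus (q : S → C → S → ℝ≥0∞) (g : S → C → EReal) (π : Policy S C) (x : S) : ℝ≥0∞ :=
  ∑' n : ℕ, costAt q π x n (gNeg g)

/-- The total cost `J_π(x) = J_π^+(x) - J_π^-(x)` of a policy. -/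
def Jpol (q : S → C → S → ℝ≥0∞) (g : S → C → EReal) (π : Policy S C) (x : S) : EReal :=
  signedSum (Jplus q g π x) (Jminus q g π x)

/-- The general convergence (GC) condition: `sup_π J_π^-(x) < ∞` for all `x`. -/
def GC (U : S → Set C) (q : S → C → S → ℝ≥0∞) (g : S → C → EReal) : Prop :=
  ∀ x : S, (⨆ π ∈ {π' : Policy S C | IsPolicy U π'}, Jminus q g π x) ≠ ⊤

/-- The optimal cost function `J*(x) = inf_π J_π(x)`. -/
def Jstar (U : S → Set C) (q : S → C → S → ℝ≥0∞) (g : S → C → EReal) (x : S) : EReal :=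
  ⨅ π ∈ {π' : Policy S C | IsPolicy U π'}, Jpol q g π x

/-- `J^{*+}(x) = inf_π J_π^+(x)`. -/
def JstarPlus (U : S → Set C) (q : S → C → S → ℝ≥0∞) (g : S → C → EReal) (x : S) : ℝ≥0∞ :=
  ⨅ π ∈ {π' : Policy S C | IsPolicy U π'}, Jplus q g π x

/-- `J^{*-}(x) = inf_π J_π^-(x)`. -/
def JstarMinus (U : S → Set C) (q : S → C → S → ℝ≥0∞) (g : S → C → EReal) (x : S) : ℝ≥0∞ :=
  ⨅ π ∈ {π' : Policy S C | IsPolicy U π'}, Jminus q g π x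

/-- The general one-stage dynamic programming operator with one-stage cost `c`:
`(opT c J)(x) = inf_{u ∈ U(x)} { c(x,u) + ∑_{x'} J(x') q(x'|x,u) }`, where the
bracket is evaluated by separating positive and negative parts, with the
convention `∞ - ∞ = ∞`. -/
def opT (U : S → Set C) (q : S → C → S → ℝ≥0∞) (c : S → C → EReal)
    (J : S → EReal) (x : S) : EReal :=
  ⨅ u ∈ U x,
    signedSum (ePos (c x u) + ∑' x' : S, q x u x' * ePos (J x'))
      (ePos (-(c x u)) + ∑' x' : S, q x u x' * ePos (-(J x')))

/-- The dynamic programming operator `T` of the total cost problem. -/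
def Top (U : S → Set C) (q : S → C → S → ℝ≥0∞) (g : S → C → EReal) :
    (S → EReal) → S → EReal :=
  opT U q g

/-- The operator `T₊` associated with the positive part `g₊` of the cost. -/
def TopPlus (U : S → Set C) (q : S → C → S → ℝ≥0∞) (g : S → C → EReal) :
    (S → EReal) → S → EReal :=
  opT U q (fun x u => max (g x u) 0)

/-- The operator `T₋` associated with the (negated) negative part `-g₋` of the cost. -/
def TopMinus (U : S → Set C) (q : S → C → S → ℝ≥0∞) (g : S → C → EReal) :
    (S → EReal) → S → EReal :=
  opT U q (fun x u => min (g x u) 0)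

/-- The cost-free operator `T₀`. -/
def TopZero (U : S → Set C) (q : S → C → S → ℝ≥0∞) :
    (S → EReal) → S → EReal :=
  opT U q (fun _ _ => 0)

/-- The monotone-increasing modification `T̃(J) = max{J, T(J)}` of `T`. -/
def Ttil (U : S → Set C) (q : S → C → S → ℝ≥0∞) (g : S → C → EReal)
    (J : S → EReal) (x : S) : EReal :=
  max (J x) (Top U q g J x)

/-- The operator `T_μ` associated with a stationary decision rule `μ`. -/
def Tmu (q : S → C → S → ℝ≥0∞) (g : S → C → EReal) (μ : S → C → ℝ≥0∞)
    (J : S → EReal) (x : S) : EReal :=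
  signedSum (∑' u : C, μ x u * (ePos (g x u) + ∑' x' : S, q x u x' * ePos (J x')))
    (∑' u : C, μ x u * (ePos (-(g x u)) + ∑' x' : S, q x u x' * ePos (-(J x'))))

/-- Expectation `E^π_{x₀}[J(x_n)]` of an extended-real function of the state at
time `n` (positive and negative parts combined with the convention `∞-∞=∞`). -/
def expState (q : S → C → S → ℝ≥0∞) (π : Policy S C) (x₀ : S) (n : ℕ)
    (J : S → EReal) : EReal :=
  signedSum (∑' y : S, sDist q π x₀ n y * ePos (J y))
    (∑' y : S, sDist q π x₀ n y * ePos (-(J y)))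

/-- The expected tail cost `E^π_{x₀}[∑_{k ≥ n} g(x_k, u_k)]`. -/
def tailCost (q : S → C → S → ℝ≥0∞) (g : S → C → EReal) (π : Policy S C)
    (x₀ : S) (n : ℕ) : EReal :=
  signedSum (∑' k : ℕ, costAt q π x₀ (n + k) (gPos g))
    (∑' k : ℕ, costAt q π x₀ (n + k) (gNeg g))

/-- Membership in the class `A₀(S)`: functions nowhere `-∞` such that
`inf_{n ≥ 1} T₀ⁿ(min{J, 0})` is nowhere `-∞`. -/
def MemA0 (U : S → Set C) (q : S → C → S → ℝ≥0∞) (J : S → EReal) : Prop :=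
  (∀ x : S, J x ≠ ⊥) ∧
    ∀ x : S, (⨅ n : ℕ, (TopZero U q)^[n + 1] (fun y => min (J y) 0) x) ≠ ⊥

/-!
Write `J = ↑J'` with `J' : S → ℝ≥0∞`. Since `T J ≤ J`, at every stage `n` and state `x` some
feasible control attains the infimum defining `(T J)(x)` up to `ε n`, where `∑ ε n < δ`; these
choices form a deterministic Markov policy `π`. Along `π` the expectations telescope,
`E g₊(x_n,u_n) + E J'(x_{n+1}) ≤ E J'(x_n) + ε n + E g₋(x_n,u_n)`, so
`J_π⁺(x) ≤ J(x) + δ + J_π⁻(x)`. Under GC, `J_π⁻(x)` is finite, hence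
`J*(x) ≤ J_π(x) ≤ J(x) + δ`, and `δ → 0` concludes.
-/

theorem ePos_coe (P : ℝ≥0∞) : ePos (P : EReal) = P := by
  by_cases hP : P = ⊤
  · simp [ePos, hP]
  · rw [ePos, if_neg (EReal.coe_ennreal_eq_top_iff.not.2 hP), EReal.toReal_coe_ennreal,
      ENNReal.ofReal_toReal hP]

theorem ePos_neg_coe (P : ℝ≥0∞) : ePos (-(P : EReal)) = 0 := by
  simp [ePos]

theorem coe_ePos_of_nonneg {a : EReal} (ha : 0 ≤ a) : (ePos a : EReal) = a := by
  rw [← EReal.coe_toENNReal ha, ePos_coe]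

theorem le_add_of_signedSum_le {P N b : ℝ≥0∞} (h : signedSum P N ≤ b) : P ≤ b + N := by
  by_cases hP : P = ⊤
  · rw [signedSum, if_pos hP, top_le_iff, EReal.coe_ennreal_eq_top_iff] at h
    simp [h]
  · rw [signedSum, if_neg hP, EReal.sub_le_iff_le_add (.inl (by simp)) (.inr (by simp)),
      ← EReal.coe_ennreal_add, EReal.coe_ennreal_le_coe_ennreal_iff] at h
    exact h

theorem signedSum_le_of_le_add {P N b : ℝ≥0∞} (hN : N ≠ ⊤) (h : P ≤ b + N) :
    signedSum P N ≤ b := by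
  by_cases hP : P = ⊤
  · rw [hP, top_le_iff, ENNReal.add_eq_top, or_iff_left hN] at h
    simp [h]
  · rw [signedSum, if_neg hP]
    exact EReal.sub_le_of_le_add (by exact_mod_cast h)

theorem Top_coe (U : S → Set C) (q : S → C → S → ℝ≥0∞) (g : S → C → EReal) (J : S → ℝ≥0∞)
    (x : S) :
    Top U q g (fun y => (J y : EReal)) x =
      ⨅ u ∈ U x, signedSum (gPos g x u + ∑' y, q x u y * J y) (gNeg g x u) := by
  simp only [Top, opT, ePos_coe, ePos_neg_coe, mul_zero, tsum_zero, add_zero, gPos, gNeg]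

theorem exists_mem_le_add_of_Top_le {U : S → Set C} {q : S → C → S → ℝ≥0∞} {g : S → C → EReal}
    {J : S → ℝ≥0∞} {x : S} (hU : (U x).Nonempty)
    (hJ : Top U q g (fun y => (J y : EReal)) x ≤ J x) {δ : ℝ≥0∞} (hδ : δ ≠ 0) :
    ∃ u ∈ U x, gPos g x u + ∑' y, q x u y * J y ≤ J x + δ + gNeg g x u := by
  by_cases hx : J x = ⊤
  · obtain ⟨u, hu⟩ := hU
    exact ⟨u, hu, by simp [hx]⟩
  have hlt : Top U q g (fun y => (J y : EReal)) x < (J x + δ : ℝ≥0∞) :=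
    hJ.trans_lt (EReal.coe_ennreal_lt_coe_ennreal_iff.2 (ENNReal.lt_add_right hx hδ))
  simp only [Top_coe, iInf_lt_iff] at hlt
  obtain ⟨u, hu, hlt⟩ := hlt
  exact ⟨u, hu, le_add_of_signedSum_le hlt.le⟩

def historyConsEquiv (S C : Type) (n : ℕ) :
    (S × C) × {h : List (S × C) // h.length = n} ≃ {h : List (S × C) // h.length = n + 1} :=
  Equiv.ofBijective (fun p => ⟨p.1 :: p.2.1, by simp [p.2.2]⟩)
    ⟨fun p p' hpp' => by
      obtain ⟨hd, htl⟩ := List.cons_eq_cons.1 (congrArg Subtype.val hpp')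
      exact Prod.ext hd (Subtype.ext htl),
    fun ⟨h, hh⟩ => match h, hh with
      | a :: t, hh => ⟨(a, ⟨t, Nat.succ_injective hh⟩), rfl⟩⟩

section Trajectory

variable (q : S → C → S → ℝ≥0∞) (π : Policy S C) (x₀ : S)

theorem sDist_zero (y : S) : sDist q π x₀ 0 y = if y = x₀ then 1 else 0 := by
  rw [sDist, tsum_eq_single (⟨[], rfl⟩ : {h : List (S × C) // h.length = 0})]
  · rfl
  · exact fun h hne => absurd (Subtype.ext (List.length_eq_zero_iff.1 h.2)) hne

theorem sDist_succ (n : ℕ) (y : S) :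
    sDist q π x₀ (n + 1) y = ∑' z, ∑' u, saDist q π x₀ n z u * q z u y := by
  rw [sDist, ← (historyConsEquiv S C n).tsum_eq, ENNReal.tsum_prod', ENNReal.tsum_prod']
  refine tsum_congr fun z => tsum_congr fun u => ?_
  rw [saDist, ← ENNReal.tsum_mul_right]
  rfl

theorem tsum_sDist_zero_mul (f : S → ℝ≥0∞) : ∑' y, sDist q π x₀ 0 y * f y = f x₀ := by
  simp [sDist_zero]

theorem tsum_sDist_succ_mul (n : ℕ) (f : S → ℝ≥0∞) :
    ∑' y, sDist q π x₀ (n + 1) y * f y =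
      ∑' z, ∑' u, saDist q π x₀ n z u * ∑' y, q z u y * f y := by
  simp only [sDist_succ, ← ENNReal.tsum_mul_right, ← ENNReal.tsum_mul_left, mul_assoc]
  rw [ENNReal.tsum_comm]
  exact tsum_congr fun z => ENNReal.tsum_comm

theorem saDist_mul_le_mul {n : ℕ} {z : S} {u : C} {a b : ℝ≥0∞}
    (hab : ∀ h : List (S × C), h.length = n → π h z u ≠ 0 → a ≤ b) :
    saDist q π x₀ n z u * a ≤ saDist q π x₀ n z u * b := by
  simp only [saDist, ← ENNReal.tsum_mul_right]
  refine ENNReal.tsum_le_tsum fun h => ?_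
  by_cases hπ : π h.1 z u = 0
  · simp [hπ]
  · exact mul_le_mul_right (hab h.1 h.2 hπ) _

variable {U : S → Set C} {π}

theorem tsum_saDist (hπ : IsPolicy U π) (n : ℕ) (z : S) :
    ∑' u, saDist q π x₀ n z u = sDist q π x₀ n z := by
  simp only [saDist, sDist]
  rw [ENNReal.tsum_comm]
  refine tsum_congr fun h => ?_
  rw [ENNReal.tsum_mul_left, (hπ h.1 z).1, mul_one]

theorem tsum_sDist (hq : ∀ x, ∀ u ∈ U x, ∑' y, q x u y = 1) (hπ : IsPolicy U π) (n : ℕ) :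
    ∑' y, sDist q π x₀ n y = 1 := by
  induction n with
  | zero => simp [sDist_zero]
  | succ n ih =>
    have hmass : ∀ z u, saDist q π x₀ n z u * ∑' y, q z u y = saDist q π x₀ n z u * 1 :=
      fun z u => le_antisymm
        (saDist_mul_le_mul q π x₀ fun h _ hne => (hq z u ((hπ h z).2 u hne)).le)
        (saDist_mul_le_mul q π x₀ fun h _ hne => (hq z u ((hπ h z).2 u hne)).ge)
    simpa only [Pi.one_apply, mul_one, hmass, tsum_saDist q x₀ hπ, ih] using
      tsum_sDist_succ_mul q π x₀ n 1

end Trajectory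

theorem _root_.ENNReal.tsum_le_add_tsum_of_add_succ_le {a b e : ℕ → ℝ≥0∞}
    (h : ∀ n, a n + e (n + 1) ≤ e n + b n) : ∑' n, a n ≤ e 0 + ∑' n, b n := by
  have partial_le : ∀ n, ∑ k ∈ Finset.range n, a k + e n ≤ e 0 + ∑ k ∈ Finset.range n, b k := by
    intro n
    induction n with
    | zero => simp
    | succ n ih =>
      calc ∑ k ∈ Finset.range (n + 1), a k + e (n + 1)
          = ∑ k ∈ Finset.range n, a k + (a n + e (n + 1)) := by
            rw [Finset.sum_range_succ, add_assoc]
        _ ≤ ∑ k ∈ Finset.range n, a k + e n + b n := by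
            rw [add_assoc]; exact add_le_add_right (h n) _
        _ ≤ e 0 + ∑ k ∈ Finset.range (n + 1), b k := by
            rw [Finset.sum_range_succ, ← add_assoc]; gcongr
  rw [ENNReal.tsum_eq_iSup_nat]
  refine iSup_le fun n => le_self_add.trans <| (partial_le n).trans ?_
  gcongr
  exact ENNReal.sum_le_tsum _

/-- Every control that `π` may use at stage `n` in state `x` attains the infimum defining
`(T J)(x)` up to `ε n`; `g₋` sits on the right so that the inequality stays in `ℝ≥0∞`. -/
def IsNearlyGreedy (q : S → C → S → ℝ≥0∞) (g : S → C → EReal) (J : S → ℝ≥0∞)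
    (ε : ℕ → ℝ≥0∞) (π : Policy S C) : Prop :=
  ∀ h x u, π h x u ≠ 0 → gPos g x u + ∑' y, q x u y * J y ≤ J x + ε h.length + gNeg g x u

section NearlyGreedy

variable {U : S → Set C} {q : S → C → S → ℝ≥0∞} {g : S → C → EReal} {J : S → ℝ≥0∞}
  {ε : ℕ → ℝ≥0∞} {π : Policy S C}

theorem costAt_gPos_add_le (hq : ∀ x, ∀ u ∈ U x, ∑' y, q x u y = 1) (hπ : IsPolicy U π)
    (hgr : IsNearlyGreedy q g J ε π) (x₀ : S) (n : ℕ) :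
    costAt q π x₀ n (gPos g) + ∑' y, sDist q π x₀ (n + 1) y * J y ≤
      ∑' y, sDist q π x₀ n y * J y + (ε n + costAt q π x₀ n (gNeg g)) := by
  calc costAt q π x₀ n (gPos g) + ∑' y, sDist q π x₀ (n + 1) y * J y
      = ∑' z, ∑' u, saDist q π x₀ n z u * (gPos g z u + ∑' y, q z u y * J y) := by
        simp only [costAt, tsum_sDist_succ_mul, mul_add, ENNReal.tsum_add]
    _ ≤ ∑' z, ∑' u, saDist q π x₀ n z u * (J z + ε n + gNeg g z u) :=
        ENNReal.tsum_le_tsum fun z => ENNReal.tsum_le_tsum fun u =>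
          saDist_mul_le_mul q π x₀ fun h hn hne => hn ▸ hgr h z u hne
    _ = ∑' z, sDist q π x₀ n z * J z + (ε n + costAt q π x₀ n (gNeg g)) := by
        simp only [costAt, mul_add, ENNReal.tsum_add, ENNReal.tsum_mul_right,
          tsum_saDist q x₀ hπ, tsum_sDist q x₀ hq hπ, one_mul, add_assoc]

theorem Jplus_le (hq : ∀ x, ∀ u ∈ U x, ∑' y, q x u y = 1) (hπ : IsPolicy U π)
    (hgr : IsNearlyGreedy q g J ε π) (x₀ : S) :
    Jplus q g π x₀ ≤ J x₀ + (∑' n, ε n + Jminus q g π x₀) := by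
  have h := ENNReal.tsum_le_add_tsum_of_add_succ_le (costAt_gPos_add_le hq hπ hgr x₀)
  rwa [tsum_sDist_zero_mul, ENNReal.tsum_add] at h

theorem exists_isPolicy_isNearlyGreedy (hU : ∀ x, (U x).Nonempty)
    (hJ : ∀ x, Top U q g (fun y => (J y : EReal)) x ≤ J x) (hε : ∀ n, ε n ≠ 0) :
    ∃ π, IsPolicy U π ∧ IsNearlyGreedy q g J ε π := by
  choose f hfU hf using fun n x => exists_mem_le_add_of_Top_le (hU x) (hJ x) (hε n)
  have hchosen : ∀ {h : List (S × C)} {x : S} {u : C},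
      (if u = f h.length x then 1 else 0 : ℝ≥0∞) ≠ 0 → u = f h.length x :=
    fun hne => by_contra fun hu => hne (if_neg hu)
  refine ⟨fun h x u => if u = f h.length x then 1 else 0,
    fun h x => ⟨tsum_ite_eq _ _, fun u hu => hchosen hu ▸ hfU _ _⟩,
    fun h x u hu => hchosen hu ▸ hf _ _⟩

theorem Jstar_le_add (hU : ∀ x, (U x).Nonempty) (hq : ∀ x, ∀ u ∈ U x, ∑' y, q x u y = 1)
    (hGC : GC U q g) (hJ : ∀ x, Top U q g (fun y => (J y : EReal)) x ≤ J x) (x₀ : S)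
    {δ : ℝ≥0∞} (hδ : δ ≠ 0) : Jstar U q g x₀ ≤ (J x₀ + δ : ℝ≥0∞) := by
  obtain ⟨ε, hε0, hεδ⟩ := ENNReal.exists_pos_sum_of_countable' hδ ℕ
  obtain ⟨π, hπ, hgr⟩ := exists_isPolicy_isNearlyGreedy hU hJ fun n => (hε0 n).ne'
  have hJminus : Jminus q g π x₀ ≠ ⊤ :=
    ne_top_of_le_ne_top (hGC x₀) (le_iSup₂ (f := fun π _ => Jminus q g π x₀) π hπ)
  have hJplus : Jplus q g π x₀ ≤ J x₀ + δ + Jminus q g π x₀ := by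
    rw [add_assoc]
    exact (Jplus_le hq hπ hgr x₀).trans (by gcongr)
  exact (iInf₂_le π hπ).trans (signedSum_le_of_le_add hJminus hJplus)

end NearlyGreedy

theorem _root_.EReal.le_coe_ennreal_of_forall_le_add {a : EReal} {b : ℝ≥0∞}
    (h : ∀ δ : ℝ≥0∞, δ ≠ 0 → a ≤ (b + δ : ℝ≥0∞)) : a ≤ b := by
  have hlim : Tendsto (fun δ : ℝ≥0∞ => ((b + δ : ℝ≥0∞) : EReal))
      (nhdsWithin 0 (Set.Ioi 0)) (nhds b) := by
    have hadd : Tendsto (fun δ => b + δ) (nhds 0) (nhds b) := by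
      simpa using (tendsto_const_nhds (x := b)).add (tendsto_id (x := nhds 0))
    exact ((continuous_coe_ennreal_ereal.tendsto b).comp hadd).mono_left nhdsWithin_le_nhds
  exact ge_of_tendsto hlim (eventually_nhdsWithin_of_forall fun δ hδ => h δ (ne_of_gt hδ))

theorem nonneg_superharmonic_ge_optimal_general {S C : Type}
    (U : S → Set C) (q : S → C → S → ℝ≥0∞) (g : S → C → EReal)
    (hU : ∀ x, (U x).Nonempty)
    (hq : ∀ x, ∀ u ∈ U x, (∑' x' : S, q x u x') = 1)
    (hGC : GC U q g)
    (J : S → EReal) (hJ0 : ∀ x : S, 0 ≤ J x) (hTJ : ∀ x : S, Top U q g J x ≤ J x) :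
    ∀ x : S, Jstar U q g x ≤ J x := by
  have hJ : (fun y => (ePos (J y) : EReal)) = J := funext fun y => coe_ePos_of_nonneg (hJ0 y)
  rw [← hJ] at hTJ ⊢
  exact fun x₀ => EReal.le_coe_ennreal_of_forall_le_add fun δ hδ =>
    Jstar_le_add hU hq hGC hTJ x₀ hδ

/-- any nonnegative function `J` with `J ≥ T(J)` dominates `J*`. -/
theorem nonneg_superharmonic_ge_optimal {S C : Type} [Countable S] [Countable C]
    (U : S → Set C) (q : S → C → S → ℝ≥0∞) (g : S → C → EReal)
    (hU : ∀ x, (U x).Nonempty)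
    (hg : ∀ x, ∀ u ∈ U x, g x u ≠ ⊥)
    (hq : ∀ x, ∀ u ∈ U x, (∑' x' : S, q x u x') = 1)
    (hGC : GC U q g)
    (J : S → EReal) (hJ0 : ∀ x : S, 0 ≤ J x) (hTJ : ∀ x : S, Top U q g J x ≤ J x) :
    ∀ x : S, Jstar U q g x ≤ J x :=
  nonneg_superharmonic_ge_optimal_general U q g hU hq hGC J hJ0 hTJ

end GCMDP

end
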